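/- arXiv:1307.4107 — 2 statements merged into one kernel-verified Lean document; each statement's English description precedes it below -/
import Mathlib

section
/- α-guesswork G_α(x) = (1 − ⌈α⌉_x)·w_α(x) + Σ_{i=1}^{w_α(x)} i·x_[i] is Schur-concave on probability vectors: if x ⪯ y then G_α(x) ≥ G_α(y). -/
open Finset in
private lemma strictMono_le_apply' {m n : ℕ} {g : Fin m → Fin n} (hg : StrictMono g)
    (k : Fin m) : (k : ℕ) ≤ (g k : ℕ) := by
  suffices h : ∀ j : ℕ, ∀ k : Fin m, (k : ℕ) = j → j ≤ (g k : ℕ) from h _ k rfl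
  intro j
  induction j with
  | zero => omega
  | succ j ih =>
    intro k hk
    have hj : j < m := by omega
    have h1 := ih ⟨j, hj⟩ rfl
    have h2 := hg (show (⟨j, hj⟩ : Fin m) < k by simp [Fin.lt_def]; omega)
    rw [Fin.lt_def] at h2
    omega

open Finset in
private lemma antitone_top_sum {n : ℕ} (f : Fin n → ℝ) (hf : Antitone f) (A : Finset (Fin n)) :
    ∑ j ∈ A, f j ≤ ∑ j ∈ univ.filter (fun j : Fin n => (j : ℕ) < A.card), f j := by
  have hm : A.card ≤ n := by simpa using A.card_le_univ
  set m := A.card with hmdef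
  have e := A.orderIsoOfFin rfl
  have hL : ∑ j ∈ A, f j = ∑ k : Fin m, f (e k) := by
    rw [← Finset.sum_coe_sort A f]
    exact (Fintype.sum_equiv e.toEquiv (fun k => f (e k)) (fun a => f a) (fun _ => rfl)).symm
  have hR : ∑ j ∈ univ.filter (fun j : Fin n => (j : ℕ) < m), f j
      = ∑ k : Fin m, f (Fin.castLE hm k) := by
    have hset : univ.filter (fun j : Fin n => (j : ℕ) < m) = univ.map (Fin.castLEEmb hm) := by
      ext i
      simp only [Finset.mem_filter, Finset.mem_univ, true_and, Finset.mem_map,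
        Fin.castLEEmb_apply]
      constructor
      · intro h; exact ⟨⟨(i : ℕ), h⟩, by ext; rfl⟩
      · rintro ⟨a, rfl⟩; exact a.isLt
    rw [hset, Finset.sum_map]
    rfl
  rw [hL, hR]
  apply Finset.sum_le_sum
  intro k _
  apply hf
  have hsm : StrictMono (fun k : Fin m => ((e k : Fin n))) := by
    intro a b hab
    exact_mod_cast e.strictMono hab
  have := strictMono_le_apply' hsm k
  simpa [Fin.le_def] using this

open Finset in
private lemma guess_id {n : ℕ} (f : Fin n → ℝ) :
    ∀ w : ℕ, w ≤ n →
    (1 - ∑ i ∈ univ.filter (fun i : Fin n => (i : ℕ) < w), f i) * (w : ℝ)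
      + ∑ i ∈ univ.filter (fun i : Fin n => (i : ℕ) < w), ((i : ℝ) + 1) * f i
    = ∑ k ∈ Finset.range w, (1 - ∑ i ∈ univ.filter (fun i : Fin n => (i : ℕ) < k), f i) := by
  intro w
  induction w with
  | zero => simp
  | succ w ih =>
    intro hw
    have hw' : w < n := hw
    have hins : univ.filter (fun i : Fin n => (i : ℕ) < w + 1)
        = insert (⟨w, hw'⟩ : Fin n) (univ.filter (fun i : Fin n => (i : ℕ) < w)) := by
      ext i
      simp only [Finset.mem_filter, Finset.mem_univ, true_and, Finset.mem_insert, Fin.ext_iff]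
      omega
    have hnm : (⟨w, hw'⟩ : Fin n) ∉ univ.filter (fun i : Fin n => (i : ℕ) < w) := by simp
    rw [Finset.sum_range_succ, ← ih (le_of_lt hw'), hins, Finset.sum_insert hnm,
      Finset.sum_insert hnm]
    push_cast
    ring

/-- Majorization: sums agree and each top-k partial sum of x is at most that of y. -/
def MajorizedBy {n : ℕ} (x y : Fin n → ℝ) : Prop :=
  (∑ i, x i = ∑ i, y i) ∧
  ∀ s : Finset (Fin n), ∃ t : Finset (Fin n), t.card = s.card ∧ ∑ i ∈ s, x i ≤ ∑ i ∈ t, y i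

/-- Marginal guesswork: least `i` such that the sum of the `i` largest entries reaches `α`
(here `xs` is assumed to be the decreasing rearrangement). -/
noncomputable def wA {n : ℕ} (α : ℝ) (xs : Fin n → ℝ) : ℕ :=
  sInf {i : ℕ | α ≤ ∑ j ∈ Finset.univ.filter (fun j : Fin n => (j : ℕ) < i), xs j}

/-- α-guesswork is Schur-concave: if x is majorized by y then G_α(x) ≥ G_α(y). -/
theorem stmt15 {n : ℕ} (α : ℝ) (hα : α ∈ Set.Ioc (0 : ℝ) 1) (x y : Fin n → ℝ)
    (hx0 : ∀ i, 0 ≤ x i) (hx1 : ∑ i, x i = 1)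
    (hy0 : ∀ i, 0 ≤ y i) (hy1 : ∑ i, y i = 1)
    (xs ys : Fin n → ℝ) (σ τ : Equiv.Perm (Fin n))
    (hxs : xs = x ∘ σ) (hxa : Antitone xs)
    (hys : ys = y ∘ τ) (hya : Antitone ys)
    (hxy : MajorizedBy x y) :
    (1 - ∑ i ∈ Finset.univ.filter (fun i : Fin n => (i : ℕ) < wA α xs), xs i) * (wA α xs : ℝ)
        + ∑ i ∈ Finset.univ.filter (fun i : Fin n => (i : ℕ) < wA α xs), ((i : ℝ) + 1) * xs i
      ≥ (1 - ∑ i ∈ Finset.univ.filter (fun i : Fin n => (i : ℕ) < wA α ys), ys i) * (wA α ys : ℝ)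
        + ∑ i ∈ Finset.univ.filter (fun i : Fin n => (i : ℕ) < wA α ys), ((i : ℝ) + 1) * ys i := by
  classical
  set Sx : ℕ → ℝ := fun k => ∑ i ∈ Finset.univ.filter (fun i : Fin n => (i : ℕ) < k), xs i
    with hSx
  set Sy : ℕ → ℝ := fun k => ∑ i ∈ Finset.univ.filter (fun i : Fin n => (i : ℕ) < k), ys i
    with hSy
  have hxs0 : ∀ i, 0 ≤ xs i := by intro i; rw [hxs]; exact hx0 _
  have hys0 : ∀ i, 0 ≤ ys i := by intro i; rw [hys]; exact hy0 _
  have hfiln : (Finset.univ.filter (fun i : Fin n => (i : ℕ) < n)) = Finset.univ := by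
    ext i; simp [i.isLt]
  have hSxn : Sx n = 1 := by
    simp only [hSx, hfiln]
    rw [hxs]
    simpa using (Equiv.sum_comp σ x).trans hx1
  have hSyn : Sy n = 1 := by
    simp only [hSy, hfiln]
    rw [hys]
    simpa using (Equiv.sum_comp τ y).trans hy1
  have hSx1 : ∀ k, Sx k ≤ 1 := by
    intro k
    have : Sx k ≤ ∑ i, xs i :=
      Finset.sum_le_sum_of_subset_of_nonneg (Finset.filter_subset _ _)
        (fun i _ _ => hxs0 i)
    have hxsum : ∑ i, xs i = 1 := by
      rw [hxs]; simpa using (Equiv.sum_comp σ x).trans hx1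
    linarith
  -- the key majorization inequality on partial sums of decreasing rearrangements
  have key : ∀ k, Sx k ≤ Sy k := by
    intro k
    set F := Finset.univ.filter (fun i : Fin n => (i : ℕ) < k) with hF
    have hFk : F.card ≤ k := by
      have : F.card ≤ (Finset.range k).card := by
        refine Finset.card_le_card_of_injOn (fun i : Fin n => (i : ℕ)) ?_ ?_
        · intro i hi
          simp only [hF, Finset.mem_filter] at hi
          have hi' : i ∈ Finset.univ.filter (fun i : Fin n => (i : ℕ) < k) := hi
          simpa using (Finset.mem_filter.1 hi').2
        · intro a _ b _ hab
          exact Fin.ext hab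
      simpa using this
    have h1 : Sx k = ∑ i ∈ F.image σ, x i := by
      rw [Finset.sum_image (fun a _ b _ h => σ.injective h)]
      simp [hSx, hF, hxs]
    obtain ⟨t, htc, hts⟩ := hxy.2 (F.image σ)
    have h2 : ∑ i ∈ t, y i = ∑ j ∈ t.image τ.symm, ys j := by
      rw [Finset.sum_image (fun a _ b _ h => τ.symm.injective h)]
      simp [hys]
    have h3 := antitone_top_sum ys hya (t.image τ.symm)
    have hcard : (t.image τ.symm).card ≤ k := by
      rw [Finset.card_image_of_injective _ τ.symm.injective, htc,
        Finset.card_image_of_injective _ σ.injective]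
      exact hFk
    have h4 : ∑ j ∈ Finset.univ.filter
          (fun j : Fin n => (j : ℕ) < (t.image τ.symm).card), ys j ≤ Sy k := by
      apply Finset.sum_le_sum_of_subset_of_nonneg
      · intro i hi
        simp only [Finset.mem_filter, Finset.mem_univ, true_and] at hi ⊢
        omega
      · intro i _ _; exact hys0 i
    calc Sx k = ∑ i ∈ F.image σ, x i := h1
      _ ≤ ∑ i ∈ t, y i := hts
      _ = ∑ j ∈ t.image τ.symm, ys j := h2
      _ ≤ _ := h3
      _ ≤ Sy k := h4
  have hnx : n ∈ {i : ℕ | α ≤ Sx i} := by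
    simp only [Set.mem_setOf_eq, hSxn]; exact hα.2
  have hny : n ∈ {i : ℕ | α ≤ Sy i} := by
    simp only [Set.mem_setOf_eq, hSyn]; exact hα.2
  have hwxn : wA α xs ≤ n := Nat.sInf_le hnx
  have hwyn : wA α ys ≤ n := Nat.sInf_le hny
  have hwx_mem : α ≤ Sx (wA α xs) := Nat.sInf_mem (Set.nonempty_of_mem hnx)
  have hwy_le_wx : wA α ys ≤ wA α xs :=
    Nat.sInf_le (show α ≤ Sy (wA α xs) from hwx_mem.trans (key _))
  rw [ge_iff_le, guess_id xs _ hwxn, guess_id ys _ hwyn]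
  calc ∑ k ∈ Finset.range (wA α ys), (1 - Sy k)
      ≤ ∑ k ∈ Finset.range (wA α ys), (1 - Sx k) := by
        apply Finset.sum_le_sum
        intro k _
        linarith [key k]
    _ ≤ ∑ k ∈ Finset.range (wA α xs), (1 - Sx k) := by
        apply Finset.sum_le_sum_of_subset_of_nonneg
          (Finset.range_subset_range.2 hwy_le_wx)
        intro k _ _
        linarith [hSx1 k]
end

section
/- Let G be a finite group, H ≤ G, π ∈ G. Let x, z be the uniform distribution on the left coset πH and y the point mass at π⁻¹. Then the convolution x * y * z equals the uniform distribution on πH, while x * z is supported on the set πHπH (a translate of the double coset HπH); in particular, if πHπ⁻¹ ≠ H then the support of x * z is strictly larger than the support of x * y * z. -/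
open scoped Pointwise

/-- Convolution of two functions on a finite group. -/
def conv {G : Type*} [Group G] [Fintype G] (a b : G → ℝ) : G → ℝ :=
  fun g => ∑ h, a (g * h⁻¹) * b h

/-- The uniform distribution on a subset of a finite group. -/
noncomputable def uniformOn {G : Type*} [Group G] [Fintype G] (S : Set G) : G → ℝ :=
  S.indicator fun _ => 1 / (Nat.card S : ℝ)

/-- With `x`, `z` uniform on the left coset `πH` and `y` the point mass at `π⁻¹`:
`x * y * z` is uniform on `πH`, while `x * z` is supported on `πHπH`; if moreover
`πHπ⁻¹ ≠ H` then the support of `x * z` is strictly larger than that of `x * y * z`. -/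
theorem stmt18 {G : Type*} [Group G] [Fintype G] [DecidableEq G] (H : Subgroup G) (π : G)
    (x y z : G → ℝ)
    (hx : x = uniformOn (π • (H : Set G)))
    (hy : y = fun g => if g = π⁻¹ then (1 : ℝ) else 0)
    (hz : z = uniformOn (π • (H : Set G))) :
    conv (conv x y) z = uniformOn (π • (H : Set G)) ∧
    {g : G | conv x z g ≠ 0} ⊆ {g : G | ∃ h₁ ∈ H, ∃ h₂ ∈ H, g = π * h₁ * π * h₂} ∧
    (Subgroup.map (MulAut.conj π).toMonoidHom H ≠ H →
      Nat.card {g : G | conv x z g ≠ 0} > Nat.card {g : G | conv (conv x y) z g ≠ 0}) := by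
  subst hx hy hz
  set S : Set G := π • (H : Set G) with hSdef
  have hmemS : ∀ g : G, g ∈ S ↔ π⁻¹ * g ∈ H := by
    intro g
    rw [hSdef, Set.mem_smul_set_iff_inv_smul_mem, smul_eq_mul]
    rfl
  have hπS : π ∈ S := (hmemS π).2 (by simpa using one_mem H)
  have hfin : S.Finite := Set.toFinite S
  have hncard : Nat.card ↥S ≠ 0 := by
    have : Nonempty ↥S := ⟨⟨π, hπS⟩⟩
    exact Nat.card_ne_zero.2 ⟨this, Set.Finite.to_subtype hfin⟩
  have hc : (Nat.card ↥S : ℝ) ≠ 0 := Nat.cast_ne_zero.2 hncard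
  -- uniformOn S is congruent under membership-iff
  have hcong : ∀ a b : G, (a ∈ S ↔ b ∈ S) → uniformOn S a = uniformOn S b := by
    intro a b hab
    unfold uniformOn
    by_cases h : b ∈ S
    · rw [Set.indicator_of_mem (hab.2 h), Set.indicator_of_mem h]
    · rw [Set.indicator_of_notMem (fun ha => h (hab.1 ha)), Set.indicator_of_notMem h]
  have hzero : ∀ g ∉ S, uniformOn S g = 0 := fun g hg => Set.indicator_of_notMem hg _
  have hval : ∀ g ∈ S, uniformOn S g = 1 / (Nat.card ↥S : ℝ) := fun g hg => Set.indicator_of_mem hg _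
  have hnonneg : ∀ g, 0 ≤ uniformOn S g := by
    intro g
    unfold uniformOn
    exact Set.indicator_nonneg (fun _ _ => by positivity) g
  -- step 1 : conv u y
  have hxy : conv (uniformOn S) (fun g => if g = π⁻¹ then (1:ℝ) else 0)
      = fun g => uniformOn S (g * π) := by
    funext g
    simp only [conv, mul_ite, mul_one, mul_zero]
    rw [Finset.sum_ite_eq' Finset.univ π⁻¹ (fun h => uniformOn S (g * h⁻¹))]
    simp
  have key : conv (fun g => uniformOn S (g * π)) (uniformOn S) = uniformOn S := by
    funext g
    simp only [conv]
    rw [← Finset.sum_subset (Finset.subset_univ hfin.toFinset) (fun h _ hh => by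
      rw [hzero h (by simpa using hh), mul_zero])]
    have hterm : ∀ h ∈ hfin.toFinset,
        uniformOn S (g * h⁻¹ * π) * uniformOn S h
          = uniformOn S g * (1 / (Nat.card ↥S : ℝ)) := by
      intro h hh
      have hhS : h ∈ S := hfin.mem_toFinset.1 hh
      have hk : π⁻¹ * h ∈ H := (hmemS h).1 hhS
      have e1 : g * h⁻¹ * π = g * (π⁻¹ * h)⁻¹ := by group
      have e2 : uniformOn S (g * (π⁻¹ * h)⁻¹) = uniformOn S g := by
        apply hcong
        rw [hmemS, hmemS, ← mul_assoc]
        exact mul_mem_cancel_right (inv_mem hk)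
      rw [e1, e2, hval h hhS]
    rw [Finset.sum_congr rfl hterm, Finset.sum_const]
    have hcard : (hfin.toFinset.card : ℝ) = (Nat.card ↥S : ℝ) := by
      rw [Nat.card_coe_set_eq, Set.ncard_eq_toFinset_card _ hfin]
    rw [nsmul_eq_mul, hcard]
    field_simp
  have hconv3 : conv (conv (uniformOn S) (fun g => if g = π⁻¹ then (1:ℝ) else 0)) (uniformOn S)
      = uniformOn S := by rw [hxy, key]
  refine ⟨hconv3, ?_, ?_⟩
  · intro g hg
    simp only [Set.mem_setOf_eq, conv] at hg
    obtain ⟨h, -, hterm⟩ := Finset.exists_ne_zero_of_sum_ne_zero hg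
    have h1 : uniformOn S (g * h⁻¹) ≠ 0 := fun e => hterm (by rw [e, zero_mul])
    have h2 : uniformOn S h ≠ 0 := fun e => hterm (by rw [e, mul_zero])
    have m1 : g * h⁻¹ ∈ S := by
      by_contra hm; exact h1 (Set.indicator_of_notMem hm _)
    have m2 : h ∈ S := by
      by_contra hm; exact h2 (Set.indicator_of_notMem hm _)
    refine ⟨π⁻¹ * (g * h⁻¹), (hmemS _).1 m1, π⁻¹ * h, (hmemS _).1 m2, ?_⟩
    group
  · intro hne
    -- positivity of conv u u on πHπH
    have hpos : ∀ a b : G, a ∈ H → b ∈ H →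
        conv (uniformOn S) (uniformOn S) (π * a * π * b) ≠ 0 := by
      intro a b ha hb
      have : 0 < conv (uniformOn S) (uniformOn S) (π * a * π * b) := by
        apply Finset.sum_pos' (fun h _ => mul_nonneg (hnonneg _) (hnonneg _))
        refine ⟨π * b, Finset.mem_univ _, ?_⟩
        have e : π * a * π * b * (π * b)⁻¹ = π * a := by group
        rw [e]
        have m1 : π * a ∈ S := (hmemS _).2 (by simpa using ha)
        have m2 : π * b ∈ S := (hmemS _).2 (by simpa using hb)
        rw [hval _ m1, hval _ m2]
        positivity
      exact ne_of_gt this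
    -- rewrite the second support set
    have hS2 : {g : G | conv (conv (uniformOn S) (fun g => if g = π⁻¹ then (1:ℝ) else 0))
        (uniformOn S) g ≠ 0} = S := by
      rw [hconv3]
      ext g
      simp only [Set.mem_setOf_eq]
      constructor
      · intro hg
        by_contra hm
        exact hg (hzero g hm)
      · intro hg
        rw [hval g hg]
        positivity
    -- find witness b ∈ πHπ \ π²H
    have hwit : ∃ h₀ ∈ H, π * h₀ * π ∉ (π * π) • (H : Set G) := by
      by_contra hB
      push_neg at hB
      have hmap : ∀ h ∈ (H : Set G), π⁻¹ * h * π ∈ (H : Set G) := by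
        intro h hh
        have := hB h hh
        rw [Set.mem_smul_set_iff_inv_smul_mem, smul_eq_mul] at this
        have e : (π * π)⁻¹ * (π * h * π) = π⁻¹ * h * π := by group
        rwa [e] at this
      have hinj : Function.Injective (fun h : G => π⁻¹ * h * π) := by
        intro a b hab
        simpa using mul_left_cancel (mul_right_cancel hab)
      have himg : (fun h : G => π⁻¹ * h * π) '' (H : Set G) = (H : Set G) := by
        apply Set.eq_of_subset_of_ncard_le
        · rintro _ ⟨h, hh, rfl⟩; exact hmap h hh
        · rw [Set.ncard_image_of_injective _ hinj]
        · exact Set.toFinite _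
      apply hne
      ext g
      simp only [Subgroup.mem_map, MulEquiv.coe_toMonoidHom, MulAut.conj_apply]
      constructor
      · rintro ⟨h, hh, rfl⟩
        have : (h : G) ∈ (fun h : G => π⁻¹ * h * π) '' (H : Set G) := by rw [himg]; exact hh
        obtain ⟨k, hk, hke⟩ := this
        have : π * h * π⁻¹ = k := by rw [← hke]; group
        rw [this]; exact hk
      · intro hg
        refine ⟨π⁻¹ * g * π, ?_, by group⟩
        exact hmap g hg
    obtain ⟨h₀, hh₀, hb⟩ := hwit
    set A : Set G := (π * π) • (H : Set G) with hAdef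
    set b : G := π * h₀ * π with hbdef
    have hsub : insert b A ⊆ {g : G | conv (uniformOn S) (uniformOn S) g ≠ 0} := by
      intro g hg
      rcases Set.mem_insert_iff.1 hg with rfl | hgA
      · have e : b = π * h₀ * π * 1 := by rw [hbdef, mul_one]
        rw [Set.mem_setOf_eq, e]
        exact hpos h₀ 1 hh₀ (one_mem H)
      · obtain ⟨k, hk, hke⟩ := hgA
        have e : g = π * 1 * π * k := by
          rw [← hke]; show (π * π) • k = π * 1 * π * k; rw [smul_eq_mul, mul_one]
        rw [Set.mem_setOf_eq, e]
        exact hpos 1 k (one_mem H) hk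
    rw [hS2]
    rw [Nat.card_coe_set_eq, Nat.card_coe_set_eq]
    have hA : A.ncard = S.ncard := by
      rw [hAdef, hSdef, Set.ncard_smul_set, Set.ncard_smul_set]
    calc S.ncard < A.ncard + 1 := by omega
      _ = (insert b A).ncard := (Set.ncard_insert_of_notMem hb (Set.toFinite A)).symm
      _ ≤ _ := Set.ncard_le_ncard hsub (Set.toFinite _)
end
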